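/- In the general fixed-point-matrix setup, the linear map M = I + 2 W_G W_J − W_G − W_J is firmly nonexpansive: for every x ∈ ℝⁿ, ‖M x‖² ≤ ⟨M x, x⟩. -/

import Mathlib

noncomputable section
open Filter Topology

/-- `ℝⁿ` as a Euclidean space. -/
abbrev E (n : ℕ) := EuclideanSpace ℝ (Fin n)

/-- Orthogonal projection onto a subspace `T`, as an endomorphism of `ℝⁿ`. -/
def projCLM {n : ℕ} (T : Submodule ℝ (E n)) : E n →L[ℝ] E n :=
  T.subtypeL.comp (T.orthogonalProjection)

/-- A linear map is symmetric positive semidefinite. -/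
def IsSymPSD {n : ℕ} (A : E n →L[ℝ] E n) : Prop :=
  (∀ x y : E n, (inner ℝ (A x) y : ℝ) = inner ℝ x (A y)) ∧ ∀ x : E n, (0 : ℝ) ≤ inner ℝ (A x) x

/-- `W = P_T ∘ (I + P_T ∘ H ∘ P_T)⁻¹ ∘ P_T`, the building block of the Douglas–Rachford
fixed-point matrix (`Ring.inverse` is the genuine inverse since `I + P_T H P_T` is
invertible for symmetric positive semidefinite `H`). -/
def Wop {n : ℕ} (T : Submodule ℝ (E n)) (H : E n →L[ℝ] E n) : E n →L[ℝ] E n :=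
  projCLM T * Ring.inverse (1 + projCLM T * H * projCLM T) * projCLM T

/-- The Douglas–Rachford fixed-point matrix `M = I + 2 W_G W_J − W_G − W_J`. -/
def Mop {n : ℕ} (TJ TG : Submodule ℝ (E n)) (HJ HG : E n →L[ℝ] E n) : E n →L[ℝ] E n :=
  1 + (2 : ℝ) • (Wop TG HG * Wop TJ HJ) - Wop TG HG - Wop TJ HJ

/-- The relaxed matrix `M_λ = (1 − λ) I + λ M`. -/
def Mlam {n : ℕ} (lam : ℝ) (TJ TG : Submodule ℝ (E n)) (HJ HG : E n →L[ℝ] E n) :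
    E n →L[ℝ] E n :=
  (1 - lam) • (1 : E n →L[ℝ] E n) + lam • Mop TJ TG HJ HG

/-- The fixed-point set `Fix A = {x | A x = x}` as a submodule, i.e. `ker (A − I)`. -/
def FixM {n : ℕ} (A : E n →L[ℝ] E n) : Submodule ℝ (E n) :=
  LinearMap.ker ((A - 1 : E n →L[ℝ] E n) : E n →ₗ[ℝ] E n)

/-- `M^∞`: the orthogonal projection onto `Fix M`. -/
def Minf {n : ℕ} (TJ TG : Submodule ℝ (E n)) (HJ HG : E n →L[ℝ] E n) : E n →L[ℝ] E n :=
  projCLM (FixM (Mop TJ TG HJ HG))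

/-- The spectral radius of an endomorphism of `ℝⁿ`: the supremum of the moduli of the
complex eigenvalues (eigenvalues of the complexified matrix). -/
def specRad {n : ℕ} (A : E n →L[ℝ] E n) : ℝ :=
  sSup ((fun z : ℂ => ‖z‖) ''
    spectrum ℂ (((LinearMap.toMatrix (EuclideanSpace.basisFun (Fin n) ℝ).toBasis
      (EuclideanSpace.basisFun (Fin n) ℝ).toBasis) A.toLinearMap).map (algebraMap ℝ ℂ)))

/-- The cosine of the Friedrichs angle between two subspaces `U` and `V`. -/
def cF {n : ℕ} (U V : Submodule ℝ (E n)) : ℝ :=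
  sSup {r : ℝ | ∃ u v : E n, u ∈ U ⊓ (U ⊓ V)ᗮ ∧ v ∈ V ⊓ (U ⊓ V)ᗮ ∧
    ‖u‖ ≤ 1 ∧ ‖v‖ ≤ 1 ∧ r = (inner ℝ u v : ℝ)}

/-! `W = P_T (1 + P_T H P_T)⁻¹ P_T` is firmly nonexpansive: for `y = (1 + P_T H P_T)⁻¹ P_T x`,
`⟪W x, x⟫ = ⟪(1 + P_T H P_T) y, y⟫ ≥ ‖y‖² ≥ ‖P_T y‖² = ‖W x‖²`. Firm nonexpansiveness of `W` is
equivalent to nonexpansiveness of the reflection `2W − 1`, and `2M − 1 = (2W_G − 1)(2W_J − 1)` is a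
composition of two such reflections, hence nonexpansive; so `M` is firmly nonexpansive. -/

open scoped InnerProductSpace

section InnerProductSpace

variable {F : Type*} [NormedAddCommGroup F] [InnerProductSpace ℝ F]

theorem norm_two_smul_sub_le_iff (x y : F) :
    ‖(2 : ℝ) • y - x‖ ≤ ‖x‖ ↔ ‖y‖ ^ 2 ≤ ⟪y, x⟫_ℝ := by
  rw [← sq_le_sq₀ (norm_nonneg _) (norm_nonneg _), norm_sub_sq_real, norm_smul,
    real_inner_smul_left, Real.norm_two]
  constructor <;> intro h <;> nlinarith

theorem isUnit_of_norm_sq_le_inner [FiniteDimensional ℝ F] {A : F →L[ℝ] F}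
    (hA : ∀ y, ‖y‖ ^ 2 ≤ ⟪A y, y⟫_ℝ) : IsUnit A := by
  rw [ContinuousLinearMap.isUnit_iff_isUnit_toLinearMap, LinearMap.isUnit_iff_ker_eq_bot,
    LinearMap.ker_eq_bot']
  intro y hy
  have h := hA y
  rw [ContinuousLinearMap.coe_coe] at hy
  rw [hy, inner_zero_left] at h
  simpa using h

theorem norm_sq_conj_inverse_apply_le_inner [FiniteDimensional ℝ F] {P A : F →L[ℝ] F}
    (hP : (P : F →ₗ[ℝ] F).IsSymmetric) (hPy : ∀ y, ‖P y‖ ≤ ‖y‖)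
    (hA : ∀ y, ‖y‖ ^ 2 ≤ ⟪A y, y⟫_ℝ) (x : F) :
    ‖(P * Ring.inverse A * P) x‖ ^ 2 ≤ ⟪(P * Ring.inverse A * P) x, x⟫_ℝ := by
  set y := Ring.inverse A (P x)
  have hAy : A y = P x := by
    rw [← mul_apply_eq_comp, Ring.mul_inverse_cancel A (isUnit_of_norm_sq_le_inner hA),
      one_apply_eq_self]
  calc ‖P y‖ ^ 2 ≤ ‖y‖ ^ 2 := by gcongr; exact hPy y
    _ ≤ ⟪A y, y⟫_ℝ := hA y
    _ = ⟪P y, x⟫_ℝ := by rw [hAy]; exact (hP x y).trans (real_inner_comm _ _)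

end InnerProductSpace

variable {n : ℕ}

theorem projCLM_eq_starProjection (T : Submodule ℝ (E n)) : projCLM T = T.starProjection := rfl

theorem norm_sq_le_inner_one_add_projCLM_conj (T : Submodule ℝ (E n)) {H : E n →L[ℝ] E n}
    (hH : IsSymPSD H) (y : E n) :
    ‖y‖ ^ 2 ≤ ⟪(1 + projCLM T * H * projCLM T) y, y⟫_ℝ := by
  rw [projCLM_eq_starProjection, add_apply, one_apply_eq_self, inner_add_left,
    real_inner_self_eq_norm_sq, mul_apply_eq_comp, mul_apply_eq_comp,
    Submodule.inner_starProjection_left_eq_right]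
  linarith [hH.2 (T.starProjection y)]

theorem norm_sq_Wop_apply_le_inner (T : Submodule ℝ (E n)) {H : E n →L[ℝ] E n}
    (hH : IsSymPSD H) (x : E n) : ‖Wop T H x‖ ^ 2 ≤ ⟪Wop T H x, x⟫_ℝ :=
  norm_sq_conj_inverse_apply_le_inner T.starProjection_isSymmetric T.norm_starProjection_apply_le
    (norm_sq_le_inner_one_add_projCLM_conj T hH) x

theorem two_smul_Mop_apply_sub (TJ TG : Submodule ℝ (E n)) (HJ HG : E n →L[ℝ] E n) (x : E n) :
    (2 : ℝ) • Mop TJ TG HJ HG x - x =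
      (2 : ℝ) • Wop TG HG ((2 : ℝ) • Wop TJ HJ x - x) - ((2 : ℝ) • Wop TJ HJ x - x) := by
  simp only [Mop, sub_apply, add_apply, smul_apply, mul_apply_eq_comp, one_apply_eq_self,
    map_sub, map_smul]
  module

/-- In the general fixed-point-matrix setup, `M = I + 2W_G W_J − W_G − W_J`
is firmly nonexpansive: `‖M x‖² ≤ ⟨M x, x⟩` for all `x`. -/
theorem statement7 {n : ℕ} (TJ TG : Submodule ℝ (E n)) (HJ HG : E n →L[ℝ] E n)
    (hHJ : IsSymPSD HJ) (hHG : IsSymPSD HG) :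
    ∀ x : E n, ‖Mop TJ TG HJ HG x‖ ^ 2 ≤ (inner ℝ (Mop TJ TG HJ HG x) x : ℝ) := by
  intro x
  set u := (2 : ℝ) • Wop TJ HJ x - x
  have hu : ‖u‖ ≤ ‖x‖ := (norm_two_smul_sub_le_iff _ _).2 (norm_sq_Wop_apply_le_inner TJ hHJ x)
  have hv : ‖(2 : ℝ) • Wop TG HG u - u‖ ≤ ‖u‖ :=
    (norm_two_smul_sub_le_iff _ _).2 (norm_sq_Wop_apply_le_inner TG hHG u)
  rw [← norm_two_smul_sub_le_iff, two_smul_Mop_apply_sub]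
  exact hv.trans hu
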